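/- arXiv:2508.18252 — 4 statements merged into one kernel-verified Lean document; each statement's English description precedes it below -/
import Mathlib

section
/- For a finite MDP, there exists τ ∈ [0,1) such that for all pairs of policies π, π' and all states s, the sign of V^π_γ(s) − V^{π'}_γ(s) is constant for all γ ∈ (τ, 1). In particular, the preference ordering between any two policies' values at any state is invariant on (τ, 1). -/
open Matrix Polynomial

private lemma sign_div_eq_sign_mul (x y : ℝ) (hy : y ≠ 0) :
    Real.sign (x / y) = Real.sign (x * y) := by
  rcases hy.lt_or_gt with hy | hy
  · rcases lt_trichotomy x 0 with hx | hx | hx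
    · rw [Real.sign_of_pos (div_pos_of_neg_of_neg hx hy),
        Real.sign_of_pos (mul_pos_of_neg_of_neg hx hy)]
    · simp [hx]
    · rw [Real.sign_of_neg (div_neg_of_pos_of_neg hx hy),
        Real.sign_of_neg (mul_neg_of_pos_of_neg hx hy)]
  · rcases lt_trichotomy x 0 with hx | hx | hx
    · rw [Real.sign_of_neg (div_neg_of_neg_of_pos hx hy),
        Real.sign_of_neg (mul_neg_of_neg_of_pos hx hy)]
    · simp [hx]
    · rw [Real.sign_of_pos (div_pos hx hy), Real.sign_of_pos (mul_pos hx hy)]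

private lemma sign_eq_of_forall_ne {f : ℝ → ℝ} (hf : Continuous f) {a b : ℝ}
    (h : ∀ x, a < x → x < b → f x ≠ 0) : ∀ γ γ', a < γ → γ < b → a < γ' → γ' < b →
    Real.sign (f γ) = Real.sign (f γ') := by
  have key : ∀ γ γ', γ ≤ γ' → a < γ → γ < b → a < γ' → γ' < b →
      Real.sign (f γ) = Real.sign (f γ') := by
    intro γ γ' hle h1 h2 h3 h4
    have hγ := h γ h1 h2
    have hγ' := h γ' h3 h4
    rcases hγ.lt_or_gt with hneg | hpos
    · rcases hγ'.lt_or_gt with hneg' | hpos'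
      · rw [Real.sign_of_neg hneg, Real.sign_of_neg hneg']
      · exfalso
        obtain ⟨x, hx, hfx⟩ := intermediate_value_Icc hle hf.continuousOn
          (Set.mem_Icc.mpr ⟨hneg.le, hpos'.le⟩)
        exact h x (lt_of_lt_of_le h1 hx.1) (lt_of_le_of_lt hx.2 h4) hfx
    · rcases hγ'.lt_or_gt with hneg' | hpos'
      · exfalso
        obtain ⟨x, hx, hfx⟩ := intermediate_value_Icc' hle hf.continuousOn
          (Set.mem_Icc.mpr ⟨hneg'.le, hpos.le⟩)
        exact h x (lt_of_lt_of_le h1 hx.1) (lt_of_le_of_lt hx.2 h4) hfx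
      · rw [Real.sign_of_pos hpos, Real.sign_of_pos hpos']
  intro γ γ' h1 h2 h3 h4
  rcases le_total γ γ' with hle | hle
  · exact key γ γ' hle h1 h2 h3 h4
  · exact (key γ' γ hle h3 h4 h1 h2).symm

private lemma det_one_sub_smul_ne_zero {n : ℕ} (P : Matrix (Fin n) (Fin n) ℝ)
    (hnn : ∀ s s', 0 ≤ P s s') (hrow : ∀ s, ∑ s', P s s' = 1)
    {γ : ℝ} (h0 : 0 ≤ γ) (h1 : γ < 1) : (1 - γ • P).det ≠ 0 := by
  intro h
  obtain ⟨v, hv, hmv⟩ := (Matrix.exists_mulVec_eq_zero_iff).mpr h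
  have hvs : ∀ s, v s = γ * ∑ s', P s s' * v s' := by
    intro s
    have h2 : (1 - γ • P) *ᵥ v = v - γ • (P *ᵥ v) := by
      rw [Matrix.sub_mulVec, Matrix.one_mulVec, Matrix.smul_mulVec]
    rw [h2] at hmv
    have := congrFun hmv s
    simp only [Pi.sub_apply, Pi.smul_apply, Pi.zero_apply, smul_eq_mul, sub_eq_zero] at this
    rw [this]
    simp [Matrix.mulVec, dotProduct]
  obtain ⟨s₁, hs₁⟩ := Function.ne_iff.mp hv
  obtain ⟨s₀, -, hmax⟩ := Finset.exists_max_image Finset.univ (fun s => |v s|)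
    ⟨s₁, Finset.mem_univ s₁⟩
  have hpos : 0 < |v s₀| :=
    lt_of_lt_of_le (abs_pos.mpr hs₁) (hmax s₁ (Finset.mem_univ s₁))
  have hle : |v s₀| ≤ γ * |v s₀| := by
    calc |v s₀| = |γ * ∑ s', P s₀ s' * v s'| := by rw [← hvs s₀]
    _ = γ * |∑ s', P s₀ s' * v s'| := by rw [abs_mul, abs_of_nonneg h0]
    _ ≤ γ * ∑ s', |P s₀ s' * v s'| :=
        mul_le_mul_of_nonneg_left (Finset.abs_sum_le_sum_abs _ _) h0
    _ ≤ γ * ∑ s', P s₀ s' * |v s₀| := by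
        apply mul_le_mul_of_nonneg_left _ h0
        apply Finset.sum_le_sum
        intro s' _
        rw [abs_mul, abs_of_nonneg (hnn s₀ s')]
        exact mul_le_mul_of_nonneg_left (hmax s' (Finset.mem_univ s')) (hnn s₀ s')
    _ = γ * |v s₀| := by rw [← Finset.sum_mul, hrow s₀, one_mul]
  nlinarith

/-- **Eventual invariance of value comparisons.** For a finite MDP (finitely many
policies `i : ι`, each with row-stochastic matrix `P i` and reward vector `r i`,
and discounted values `V i γ` solving the Bellman equations), there is a threshold
`τ ∈ [0,1)` such that for all policies `i, j` and every state `s`, the sign of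
`V i γ s - V j γ s` is the same for all `γ ∈ (τ,1)`. -/
theorem exists_threshold_sign_invariant
    (n : ℕ) (ι : Type) [Fintype ι]
    (P : ι → Matrix (Fin n) (Fin n) ℝ)
    (hP_nonneg : ∀ i s s', 0 ≤ P i s s')
    (hP_row : ∀ i s, ∑ s', P i s s' = 1)
    (r : ι → Fin n → ℝ)
    (V : ι → ℝ → Fin n → ℝ)
    (hV : ∀ i γ, 0 ≤ γ → γ < 1 →
      ∀ s, V i γ s = r i s + γ * ∑ s', P i s s' * V i γ s') :
    ∃ τ, 0 ≤ τ ∧ τ < 1 ∧ ∀ i j : ι, ∀ s : Fin n, ∀ γ γ' : ℝ,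
      τ < γ → γ < 1 → τ < γ' → γ' < 1 →
      Real.sign (V i γ s - V j γ s) = Real.sign (V i γ' s - V j γ' s) := by
  classical
  -- polynomial matrix `I - X • P i`
  set A : ι → Matrix (Fin n) (Fin n) ℝ[X] :=
    fun i => 1 - (X : ℝ[X]) • (P i).map C with hA
  have hmap : ∀ i (γ : ℝ), (evalRingHom γ).mapMatrix (A i) = 1 - γ • P i := by
    intro i γ
    ext s s'
    simp [hA, Matrix.one_apply, apply_ite (eval γ)]
    ring
  set Q : ι → ℝ[X] := fun i => (A i).det with hQdef
  have hQ : ∀ i (γ : ℝ), (Q i).eval γ = (1 - γ • P i).det := by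
    intro i γ
    have := RingHom.map_det (evalRingHom γ) (A i)
    rw [hmap] at this
    simpa using this
  set N : ι → Fin n → ℝ[X] :=
    fun i s => ((A i).adjugate *ᵥ fun s' => C (r i s')) s with hNdef
  have hN : ∀ i s (γ : ℝ), (N i s).eval γ = ((1 - γ • P i).adjugate *ᵥ r i) s := by
    intro i s γ
    have hadj : (evalRingHom γ).mapMatrix (A i).adjugate = (1 - γ • P i).adjugate := by
      rw [RingHom.map_adjugate, hmap]
    have := congrFun (congrFun hadj s)
    simp only [hNdef, Matrix.mulVec, dotProduct]
    rw [eval_finset_sum]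
    apply Finset.sum_congr rfl
    intro s' _
    rw [eval_mul, eval_C]
    congr 1
    have := congrFun (congrFun hadj s) s'
    simpa using this
  have hdet : ∀ i (γ : ℝ), 0 ≤ γ → γ < 1 → (Q i).eval γ ≠ 0 := by
    intro i γ h0 h1
    rw [hQ]
    exact det_one_sub_smul_ne_zero (P i) (hP_nonneg i) (hP_row i) h0 h1
  -- value formula via Cramer's rule
  have hVf : ∀ i (γ : ℝ), 0 ≤ γ → γ < 1 → ∀ s,
      V i γ s = (N i s).eval γ / (Q i).eval γ := by
    intro i γ h0 h1 s
    set M : Matrix (Fin n) (Fin n) ℝ := 1 - γ • P i with hM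
    have hMv : M *ᵥ V i γ = r i := by
      funext t
      have h2 : (M *ᵥ V i γ) t = V i γ t - γ * ∑ s', P i t s' * V i γ s' := by
        rw [hM, Matrix.sub_mulVec, Matrix.one_mulVec, Matrix.smul_mulVec]
        simp [Matrix.mulVec, dotProduct]
      rw [h2, hV i γ h0 h1 t]
      ring
    have hcr : M.det • V i γ = M.adjugate *ᵥ r i := by
      rw [← hMv, Matrix.mulVec_mulVec, Matrix.adjugate_mul, Matrix.smul_mulVec,
        Matrix.one_mulVec]
    have := congrFun hcr s
    simp only [Pi.smul_apply, smul_eq_mul] at this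
    rw [hN, hQ, ← hM, ← this]
    have hd : M.det ≠ 0 := by
      rw [hM]; exact det_one_sub_smul_ne_zero (P i) (hP_nonneg i) (hP_row i) h0 h1
    field_simp
  -- difference as a rational function
  set D : ι → ι → Fin n → ℝ[X] := fun i j s => N i s * Q j - N j s * Q i with hDdef
  set E : ι → ι → ℝ[X] := fun i j => Q i * Q j with hEdef
  have hEeval : ∀ i j (γ : ℝ), 0 ≤ γ → γ < 1 → (E i j).eval γ ≠ 0 := by
    intro i j γ h0 h1
    rw [hEdef]
    simp only [eval_mul]
    exact mul_ne_zero (hdet i γ h0 h1) (hdet j γ h0 h1)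
  have hdiff : ∀ i j s (γ : ℝ), 0 ≤ γ → γ < 1 →
      V i γ s - V j γ s = (D i j s).eval γ / (E i j).eval γ := by
    intro i j s γ h0 h1
    rw [hVf i γ h0 h1 s, hVf j γ h0 h1 s,
      div_sub_div _ _ (hdet i γ h0 h1) (hdet j γ h0 h1)]
    simp only [hDdef, hEdef, eval_sub, eval_mul]
    ring
  -- collect the roots
  set G : ι × ι × Fin n → ℝ[X] :=
    fun p => if D p.1 p.2.1 p.2.2 = 0 then 1 else D p.1 p.2.1 p.2.2 * E p.1 p.2.1 with hGdef
  have hEne : ∀ i j, E i j ≠ 0 := by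
    intro i j hEz
    have := hEeval i j (1/2) (by norm_num) (by norm_num)
    rw [hEz] at this
    simp at this
  have hGne : ∀ p, G p ≠ 0 := by
    intro p
    by_cases h : D p.1 p.2.1 p.2.2 = 0
    · simp [hGdef, h]
    · simp only [hGdef, if_neg h]
      exact mul_ne_zero h (hEne _ _)
  set bigP : ℝ[X] := ∏ p : ι × ι × Fin n, G p with hbigP
  have hbigne : bigP ≠ 0 := Finset.prod_ne_zero_iff.mpr fun p _ => hGne p
  set S : Finset ℝ := insert (0 : ℝ) (bigP.roots.toFinset.filter (fun x => x < 1)) with hS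
  have hSne : S.Nonempty := Finset.insert_nonempty _ _
  refine ⟨S.max' hSne, ?_, ?_, ?_⟩
  · exact Finset.le_max' S 0 (Finset.mem_insert_self _ _)
  · rw [Finset.max'_lt_iff]
    intro y hy
    rcases Finset.mem_insert.mp hy with h | h
    · rw [h]; norm_num
    · exact (Finset.mem_filter.mp h).2
  · intro i j s γ γ' hγ1 hγ2 hγ'1 hγ'2
    set τ := S.max' hSne with hτ
    have hτ0 : 0 ≤ τ := Finset.le_max' S 0 (Finset.mem_insert_self _ _)
    have hGroot : ∀ x, τ < x → x < 1 → (G (i, j, s)).eval x ≠ 0 := by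
      intro x hx1 hx2 hGz
      have hroot : bigP.eval x = 0 := by
        rw [hbigP, eval_prod]
        exact Finset.prod_eq_zero (Finset.mem_univ (i, j, s)) hGz
      have hmem : x ∈ S := by
        rw [hS]
        apply Finset.mem_insert_of_mem
        rw [Finset.mem_filter, Multiset.mem_toFinset]
        exact ⟨(Polynomial.mem_roots hbigne).mpr hroot, hx2⟩
      exact absurd (Finset.le_max' S x hmem) (not_le.mpr hx1)
    have h0γ : 0 ≤ γ := le_of_lt (lt_of_le_of_lt hτ0 hγ1)
    have h0γ' : 0 ≤ γ' := le_of_lt (lt_of_le_of_lt hτ0 hγ'1)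
    by_cases hD : D i j s = 0
    · rw [hdiff i j s γ h0γ hγ2, hdiff i j s γ' h0γ' hγ'2, hD]
      simp
    · have hGform : G (i, j, s) = D i j s * E i j := by rw [hGdef]; simp [hD]
      have hsign : ∀ x, 0 ≤ x → x < 1 →
          Real.sign (V i x s - V j x s) = Real.sign ((G (i, j, s)).eval x) := by
        intro x h0 h1
        rw [hdiff i j s x h0 h1, sign_div_eq_sign_mul _ _ (hEeval i j x h0 h1), hGform]
        simp [hEdef, eval_mul]
      rw [hsign γ h0γ hγ2, hsign γ' h0γ' hγ'2]
      exact sign_eq_of_forall_ne (Polynomial.continuous _) hGroot γ γ' hγ1 hγ2 hγ'1 hγ'2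
end

section
/- Every finite MDP has at least one Blackwell-optimal policy: there exist a policy π* and γ' ∈ [0,1) such that V^{π*}_γ(s) ≥ V^{π}_γ(s) for all states s, all policies π, and all γ ∈ (γ', 1). -/
/-!
For `0 ≤ γ < 1` and a row-stochastic `P`, a maximum principle makes `1 - γ P` invertible, so by
Cramer's rule every value `V π γ s` is a rational function of `γ`, and so is the difference of the
values of two policies. Unless it vanishes identically, such a difference has no zero on some
interval `(a, 1)`, hence constant sign there; with finitely many policies and states one interval
`(γ', 1)` works for all of them. A policy optimal at a single `γ₀ ∈ (γ', 1)`, which exists by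
policy improvement, is therefore optimal on all of `(γ', 1)`.
-/

open Filter Topology Set Polynomial Matrix

theorem Matrix.nonpos_of_le_smul_mulVec {n : Type*} [Fintype n] [DecidableEq n]
    {P : Matrix n n ℝ} (hP : P ∈ rowStochastic ℝ n) {γ : ℝ} (hγ₀ : 0 ≤ γ) (hγ₁ : γ < 1)
    {x : n → ℝ} (hx : x ≤ γ • (P *ᵥ x)) : x ≤ 0 := by
  intro i
  obtain ⟨j, -, hj⟩ := Finset.univ.exists_max_image x ⟨i, Finset.mem_univ i⟩
  have hPx : (P *ᵥ x) j ≤ x j :=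
    calc (P *ᵥ x) j = ∑ k, P j k * x k := rfl
      _ ≤ ∑ k, P j k * x j := by
        gcongr with k hk
        · exact nonneg_of_mem_rowStochastic hP
        · exact hj k hk
      _ = x j := by rw [← Finset.sum_mul, sum_row_of_mem_rowStochastic hP, one_mul]
  have hxj : x j ≤ γ * x j := (hx j).trans (mul_le_mul_of_nonneg_left hPx hγ₀)
  have : x j ≤ 0 := by nlinarith
  exact (hj i (Finset.mem_univ i)).trans this

theorem Matrix.det_one_sub_smul_ne_zero {n : Type*} [Fintype n] [DecidableEq n]
    {P : Matrix n n ℝ} (hP : P ∈ rowStochastic ℝ n) {γ : ℝ} (hγ₀ : 0 ≤ γ) (hγ₁ : γ < 1) :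
    (1 - γ • P).det ≠ 0 := by
  intro h
  obtain ⟨v, hv, hv0⟩ := exists_mulVec_eq_zero_iff.2 h
  have hfix : v = γ • (P *ᵥ v) := by
    rwa [sub_mulVec, one_mulVec, smul_mulVec, sub_eq_zero] at hv0
  have hle : v ≤ 0 := nonpos_of_le_smul_mulVec hP hγ₀ hγ₁ hfix.le
  have hge : -v ≤ 0 := nonpos_of_le_smul_mulVec hP hγ₀ hγ₁ <| by
    rw [mulVec_neg, smul_neg, ← hfix]
  exact hv (le_antisymm hle (neg_nonpos.1 hge))

theorem Matrix.eval_det_mul_eq_eval_adjugate_mulVec {n R : Type*} [Fintype n] [DecidableEq n]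
    [CommRing R] (M : Matrix n n R[X]) (b : n → R[X]) {γ : R} {y : n → R}
    (hy : M.map (eval γ) *ᵥ y = fun i => eval γ (b i)) (i : n) :
    eval γ M.det * y i = eval γ ((M.adjugate *ᵥ b) i) := by
  have hdet : eval γ M.det = (M.map (eval γ)).det := RingHom.map_det (evalRingHom γ) M
  have hadj : M.adjugate.map (eval γ) = (M.map (eval γ)).adjugate :=
    RingHom.map_adjugate (evalRingHom γ) M
  rw [← coe_evalRingHom, RingHom.map_mulVec, coe_evalRingHom, hadj, hdet]
  have := congrArg (((M.map (eval γ)).adjugate *ᵥ ·)) hy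
  simp only [mulVec_mulVec, adjugate_mul, smul_mulVec, one_mulVec] at this
  exact congrFun this i

theorem Matrix.map_eval_one_sub_X_smul {n R : Type*} [Fintype n] [DecidableEq n] [CommRing R]
    (P : Matrix n n R) (γ : R) : (1 - (X : R[X]) • P.map C).map (eval γ) = 1 - γ • P := by
  ext i j
  simp [one_apply, apply_ite (eval γ), mul_comm (P i j)]

theorem Matrix.eval_det_one_sub_X_smul {n R : Type*} [Fintype n] [DecidableEq n] [CommRing R]
    (P : Matrix n n R) (γ : R) : eval γ (1 - (X : R[X]) • P.map C).det = (1 - γ • P).det := by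
  have := RingHom.map_det (evalRingHom γ) (1 - (X : R[X]) • P.map C)
  rwa [RingHom.mapMatrix_apply, coe_evalRingHom, map_eval_one_sub_X_smul] at this

theorem Polynomial.eventually_nhdsLT_eval_ne_zero {p : ℝ[X]} (hp : p ≠ 0) (b : ℝ) :
    ∀ᶠ x in 𝓝[<] b, eval x p ≠ 0 :=
  (finite_setOfPred_isRoot hp).eventually_cofinite_notMem.filter_mono
    ((nhdsLT_le_nhdsNE b).trans (nhdsNE_le_cofinite b))

theorem Polynomial.eventually_nhdsLT_forall_Ioo_nonpos_imp (p : ℝ[X]) (b : ℝ) :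
    ∀ᶠ a in 𝓝[<] b, ∀ x ∈ Ioo a b, ∀ y ∈ Ioo a b, eval x p ≤ 0 → eval y p ≤ 0 := by
  rcases eq_or_ne p 0 with rfl | hp
  · simp
  obtain ⟨c, hcb, hc⟩ := (nhdsLT_basis b).eventually_iff.1 (eventually_nhdsLT_eval_ne_zero hp b)
  filter_upwards [Ioo_mem_nhdsLT hcb] with a ha x hx y hy hpx
  by_contra! hpy
  obtain ⟨z, hz, hpz⟩ : (0 : ℝ) ∈ (eval · p) '' Ioo a b :=
    isPreconnected_Ioo.intermediate_value hx hy p.continuous.continuousOn ⟨hpx, hpy.le⟩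
  exact hc ⟨ha.1.trans hz.1, hz.2⟩ hpz

theorem eventually_nhdsLT_forall_Ioo_nonpos_imp_of_mul_eval_eq {f : ℝ → ℝ} {p q : ℝ[X]}
    {c b : ℝ} (hcb : c < b) (hq : ∀ x ∈ Ioo c b, eval x q ≠ 0)
    (hf : ∀ x ∈ Ioo c b, f x * eval x q = eval x p) :
    ∀ᶠ a in 𝓝[<] b, ∀ x ∈ Ioo a b, ∀ y ∈ Ioo a b, f x ≤ 0 → f y ≤ 0 := by
  have hsign : ∀ x ∈ Ioo c b, f x ≤ 0 ↔ eval x (p * q) ≤ 0 := fun x hx => by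
    have hq2 : 0 < eval x q ^ 2 := by have := hq x hx; positivity
    rw [eval_mul, ← hf x hx, mul_assoc, ← sq, ← mul_le_mul_iff_of_pos_right hq2, zero_mul]
  filter_upwards [(p * q).eventually_nhdsLT_forall_Ioo_nonpos_imp b, Ioo_mem_nhdsLT hcb]
    with a hpq hca x hx y hy hfx
  have hsub : Ioo a b ⊆ Ioo c b := Ioo_subset_Ioo_left hca.1.le
  rw [hsign y (hsub hy)]
  exact hpq x hx y hy ((hsign x (hsub hx)).1 hfx)

namespace MDP

variable {S A : Type*} [Fintype S]

def transitionMatrix (T : S → A → S → ℝ) (π : S → A) : Matrix S S ℝ :=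
  of fun s s' => T s (π s) s'

def IsDiscountedValue (T : S → A → S → ℝ) (R : S → A → ℝ) (V : (S → A) → ℝ → S → ℝ) : Prop :=
  ∀ (π : S → A) (γ : ℝ), 0 ≤ γ → γ < 1 →
    ∀ s, V π γ s = R s (π s) + γ * ∑ s', T s (π s) s' * V π γ s'

variable {T : S → A → S → ℝ} {R : S → A → ℝ} {V : (S → A) → ℝ → S → ℝ} {γ : ℝ}

theorem IsDiscountedValue.eq_add_smul_mulVec (hV : IsDiscountedValue T R V) (hγ₀ : 0 ≤ γ)
    (hγ₁ : γ < 1) (π : S → A) :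
    V π γ = (fun s => R s (π s)) + γ • (transitionMatrix T π *ᵥ V π γ) :=
  funext (hV π γ hγ₀ hγ₁)

variable [DecidableEq S]

theorem transitionMatrix_mem_rowStochastic (hT_nonneg : ∀ s a s', 0 ≤ T s a s')
    (hT_sum : ∀ s a, ∑ s', T s a s' = 1) (π : S → A) :
    transitionMatrix T π ∈ rowStochastic ℝ S :=
  mem_rowStochastic_iff_sum.2 ⟨fun _ _ => hT_nonneg _ _ _, fun _ => hT_sum _ _⟩

theorem IsDiscountedValue.le_of_le_add_smul_mulVec (hV : IsDiscountedValue T R V)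
    (hγ₀ : 0 ≤ γ) (hγ₁ : γ < 1) {π : S → A} (hP : transitionMatrix T π ∈ rowStochastic ℝ S)
    {W : S → ℝ} (hW : W ≤ (fun s => R s (π s)) + γ • (transitionMatrix T π *ᵥ W)) :
    W ≤ V π γ := by
  have hbell := hV.eq_add_smul_mulVec hγ₀ hγ₁ π
  refine sub_nonpos.1 (nonpos_of_le_smul_mulVec hP hγ₀ hγ₁ fun s => ?_)
  have hWs := hW s
  have hVs := congrFun hbell s
  simp only [Pi.add_apply, Pi.smul_apply, smul_eq_mul] at hWs hVs
  simp only [Pi.sub_apply, mulVec_sub, Pi.smul_apply, smul_eq_mul]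
  linarith

theorem IsDiscountedValue.exists_sup_le (hV : IsDiscountedValue T R V)
    (hT : ∀ π, transitionMatrix T π ∈ rowStochastic ℝ S) (hγ₀ : 0 ≤ γ) (hγ₁ : γ < 1)
    (π₁ π₂ : S → A) : ∃ π, V π₁ γ ⊔ V π₂ γ ≤ V π γ := by
  set W := V π₁ γ ⊔ V π₂ γ
  let π : S → A := fun s => if V π₁ γ s ≤ V π₂ γ s then π₂ s else π₁ s
  refine ⟨π, hV.le_of_le_add_smul_mulVec hγ₀ hγ₁ (hT π) fun s => ?_⟩
  obtain ⟨σ, hσ, hπσ, hWσ⟩ : ∃ σ, V σ γ ≤ W ∧ π s = σ s ∧ W s = V σ γ s := by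
    by_cases h : V π₁ γ s ≤ V π₂ γ s
    · exact ⟨π₂, le_sup_right, if_pos h, sup_of_le_right h⟩
    · exact ⟨π₁, le_sup_left, if_neg h, sup_of_le_left (le_of_not_ge h)⟩
  calc W s = V σ γ s := hWσ
    _ = R s (σ s) + γ * ∑ s', T s (σ s) s' * V σ γ s' := hV σ γ hγ₀ hγ₁ s
    _ ≤ R s (π s) + γ * ∑ s', T s (π s) s' * W s' := by
      rw [hπσ]
      gcongr with s'
      · exact nonneg_of_mem_rowStochastic (hT σ)
      · exact hσ s'
    _ = ((fun s => R s (π s)) + γ • (transitionMatrix T π *ᵥ W)) s := rfl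

theorem IsDiscountedValue.exists_forall_le [Finite A] [Nonempty A]
    (hV : IsDiscountedValue T R V) (hT : ∀ π, transitionMatrix T π ∈ rowStochastic ℝ S)
    (hγ₀ : 0 ≤ γ) (hγ₁ : γ < 1) : ∃ πstar, ∀ π, V π γ ≤ V πstar γ := by
  obtain ⟨πstar, hmax⟩ := Finite.exists_max fun π => ∑ s, V π γ s
  refine ⟨πstar, fun π => ?_⟩
  obtain ⟨σ, hσ⟩ := hV.exists_sup_le hT hγ₀ hγ₁ πstar π
  have hle : ∀ s ∈ Finset.univ, V πstar γ s ≤ V σ γ s := fun s _ => (le_sup_left.trans hσ) s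
  have heq : ∀ s ∈ Finset.univ, V πstar γ s = V σ γ s :=
    (Finset.sum_eq_sum_iff_of_le hle).1
      ((Finset.sum_le_sum hle).antisymm (hmax σ))
  exact fun s => ((le_sup_right.trans hσ) s).trans_eq (heq s (Finset.mem_univ s)).symm

theorem IsDiscountedValue.exists_mul_eval_eq_eval (hV : IsDiscountedValue T R V)
    (hT : ∀ π, transitionMatrix T π ∈ rowStochastic ℝ S) (π : S → A) (s : S) :
    ∃ p q : ℝ[X], ∀ γ ∈ Ico (0 : ℝ) 1, eval γ q ≠ 0 ∧ V π γ s * eval γ q = eval γ p := by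
  set M := 1 - (X : ℝ[X]) • (transitionMatrix T π).map C
  refine ⟨(M.adjugate *ᵥ fun s => C (R s (π s))) s, M.det, fun γ ⟨hγ₀, hγ₁⟩ => ⟨?_, ?_⟩⟩
  · rw [eval_det_one_sub_X_smul]
    exact det_one_sub_smul_ne_zero (hT π) hγ₀ hγ₁
  · rw [mul_comm]
    refine eval_det_mul_eq_eval_adjugate_mulVec _ _ ?_ s
    rw [map_eval_one_sub_X_smul, sub_mulVec, one_mulVec, smul_mulVec, sub_eq_iff_eq_add]
    simpa only [eval_C] using hV.eq_add_smul_mulVec hγ₀ hγ₁ π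

theorem IsDiscountedValue.eventually_nhdsLT_forall_Ioo_sub_nonpos_imp
    (hV : IsDiscountedValue T R V) (hT : ∀ π, transitionMatrix T π ∈ rowStochastic ℝ S)
    (π π' : S → A) (s : S) :
    ∀ᶠ a in 𝓝[<] 1, ∀ x ∈ Ioo a 1, ∀ y ∈ Ioo a 1,
      V π x s - V π' x s ≤ 0 → V π y s - V π' y s ≤ 0 := by
  obtain ⟨p, q, hpq⟩ := hV.exists_mul_eval_eq_eval hT π s
  obtain ⟨p', q', hpq'⟩ := hV.exists_mul_eval_eq_eval hT π' s
  refine eventually_nhdsLT_forall_Ioo_nonpos_imp_of_mul_eval_eq (p := p * q' - p' * q)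
    (q := q * q') zero_lt_one (fun x hx => ?_) (fun x hx => ?_)
  · obtain ⟨hq, -⟩ := hpq x (Ioo_subset_Ico_self hx)
    obtain ⟨hq', -⟩ := hpq' x (Ioo_subset_Ico_self hx)
    rw [eval_mul]
    exact mul_ne_zero hq hq'
  · obtain ⟨-, hp⟩ := hpq x (Ioo_subset_Ico_self hx)
    obtain ⟨-, hp'⟩ := hpq' x (Ioo_subset_Ico_self hx)
    rw [eval_sub, eval_mul, eval_mul, eval_mul, ← hp, ← hp']
    ring

end MDP

open MDP in
theorem exists_blackwell_optimal_policy_general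
    (S A : Type) [Fintype S] [Fintype A] [Nonempty A]
    (T : S → A → S → ℝ) (R : S → A → ℝ)
    (hT_nonneg : ∀ s a s', 0 ≤ T s a s')
    (hT_sum : ∀ s a, ∑ s', T s a s' = 1)
    (V : (S → A) → ℝ → S → ℝ)
    (hV : ∀ (π : S → A) (γ : ℝ), 0 ≤ γ → γ < 1 →
      ∀ s, V π γ s = R s (π s) + γ * ∑ s', T s (π s) s' * V π γ s') :
    ∃ (πstar : S → A) (γ' : ℝ), 0 ≤ γ' ∧ γ' < 1 ∧
      ∀ (π : S → A) (s : S) (γ : ℝ), γ' < γ → γ < 1 →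
        V π γ s ≤ V πstar γ s := by
  classical
  have hV : IsDiscountedValue T R V := hV
  have hT := transitionMatrix_mem_rowStochastic hT_nonneg hT_sum
  obtain ⟨γ', ⟨hγ'₀, hγ'₁⟩, hstable⟩ : ∃ γ' ∈ Ioo (0 : ℝ) 1, ∀ π π' s,
      ∀ x ∈ Ioo γ' 1, ∀ y ∈ Ioo γ' 1, V π x s - V π' x s ≤ 0 → V π y s - V π' y s ≤ 0 :=
    (Eventually.and (Ioo_mem_nhdsLT one_pos) <| eventually_all.2 fun π =>
      eventually_all.2 fun π' => eventually_all.2 <|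
        hV.eventually_nhdsLT_forall_Ioo_sub_nonpos_imp hT π π').exists
  have hmid : (γ' + 1) / 2 ∈ Ioo γ' 1 := ⟨by linarith, by linarith⟩
  obtain ⟨πstar, hopt⟩ := hV.exists_forall_le hT (by linarith [hmid.1]) hmid.2
  refine ⟨πstar, γ', hγ'₀.le, hγ'₁, fun π s γ hγ' hγ₁ => ?_⟩
  exact sub_nonpos.1 (hstable π πstar s _ hmid γ ⟨hγ', hγ₁⟩ (sub_nonpos.2 (hopt π s)))

/-- **Existence of a Blackwell-optimal policy** (Blackwell 1962). Every finite MDP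
has a policy `π⋆` and a threshold `γ' ∈ [0,1)` such that `π⋆` is discount-optimal
for every discount factor `γ ∈ (γ',1)`. -/
theorem exists_blackwell_optimal_policy
    (S A : Type) [Fintype S] [Fintype A] [Nonempty S] [Nonempty A]
    (T : S → A → S → ℝ) (R : S → A → ℝ)
    (hT_nonneg : ∀ s a s', 0 ≤ T s a s')
    (hT_sum : ∀ s a, ∑ s', T s a s' = 1)
    (V : (S → A) → ℝ → S → ℝ)
    (hV : ∀ (π : S → A) (γ : ℝ), 0 ≤ γ → γ < 1 →
      ∀ s, V π γ s = R s (π s) + γ * ∑ s', T s (π s) s' * V π γ s') :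
    ∃ (πstar : S → A) (γ' : ℝ), 0 ≤ γ' ∧ γ' < 1 ∧
      ∀ (π : S → A) (s : S) (γ : ℝ), γ' < γ → γ < 1 →
        V π γ s ≤ V πstar γ s :=
  exists_blackwell_optimal_policy_general S A T R hT_nonneg hT_sum V hV
end

section
/- For a finite MDP, policy π, action a, and γ ∈ [0,1), writing ρ = (1−γ)/γ, the vector of action-value advantages satisfies q^π_a − v^π = Σ_{j=−1}^{∞} ρ^j ψ^{a,π}_j, where ψ^{a,π}_{−1} = (P_a − I) y^π_{−1}, ψ^{a,π}_0 = r_a + (P_a − I) y^π_0 − y^π_{−1}, and ψ^{a,π}_j = (P_a − I) y^π_j − y^π_{j−1} for j ≥ 1, provided the Laurent expansion v^π_γ = (1+ρ) Σ_{j=−1}^{∞} ρ^j y^π_j holds. -/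
/-!
With `γ = 1/(1+ρ)` the expansion gives `γ v = Σ ρ^j y_j` and `(1-γ) v = ρ γ v = Σ ρ^{j+1} y_j`.
Hence `q - v = r_a + γ (P_a - I) v - (1-γ) v` is the series whose `ρ^j`-coefficient is
`(P_a - I) y_j - y_{j-1}` (with `y_{-2} = 0`), plus `r_a` at `ρ^0`; these are the `ψ_j`.
-/

open Matrix

section LaurentSeries

variable {K M : Type*} [DivisionRing K] [AddCommGroup M] [Module K M] [TopologicalSpace M]

theorem HasSum.zpow_smul_shift [IsTopologicalAddGroup M] [ContinuousConstSMul K M]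
    {ρ : K} (hρ : ρ ≠ 0) {f : ℕ → M} {s : M}
    (h : HasSum (fun j : ℕ => ρ ^ ((j : ℤ) - 1) • f j) s) :
    HasSum (fun j : ℕ => ρ ^ ((j : ℤ) - 1) • if j = 0 then 0 else f (j - 1)) (ρ • s) := by
  refine (hasSum_nat_add_iff' 1).1 ?_
  simpa [smul_smul, ← zpow_one_add₀ hρ] using h.const_smul ρ

theorem hasSum_zpow_smul_ite_one (ρ : K) (r : M) :
    HasSum (fun j : ℕ => ρ ^ ((j : ℤ) - 1) • if j = 1 then r else 0) r := by
  convert hasSum_ite_eq 1 r using 2 with j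
  split_ifs with hj <;> simp [hj]

end LaurentSeries

theorem advantage_laurent_expansion_general
    (n : ℕ)
    (Pa : Matrix (Fin n) (Fin n) ℝ)
    (ra : Fin n → ℝ)
    (γ ρ : ℝ) (hγ0 : 0 < γ) (hγ1 : γ < 1) (hρ : ρ = (1 - γ) / γ)
    (v : Fin n → ℝ)
    (y ψ : ℕ → Fin n → ℝ)
    -- the Laurent expansion v = (1+ρ) Σ_{j≥-1} ρ^j y_j
    (hLaurent : HasSum (fun j : ℕ => ((1 + ρ) * ρ ^ ((j : ℤ) - 1)) • y j) v)
    -- ψ_{-1} = (P_a - I) y_{-1}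
    (hψ0 : ψ 0 = Pa *ᵥ y 0 - y 0)
    -- ψ_0 = r_a + (P_a - I) y_0 - y_{-1}
    (hψ1 : ψ 1 = ra + (Pa *ᵥ y 1 - y 1) - y 0)
    -- ψ_j = (P_a - I) y_j - y_{j-1} for j ≥ 1
    (hψ : ∀ j, 2 ≤ j → ψ j = (Pa *ᵥ y j - y j) - y (j - 1)) :
    HasSum (fun j : ℕ => (ρ ^ ((j : ℤ) - 1)) • ψ j)
      ((ra + γ • (Pa *ᵥ v)) - v) := by
  have hρ0 : ρ ≠ 0 := by
    rw [hρ]; exact div_ne_zero (sub_ne_zero.2 hγ1.ne') hγ0.ne'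
  have hγρ : γ * (1 + ρ) = 1 := by
    rw [hρ]; field_simp; ring
  have hy : HasSum (fun j : ℕ => ρ ^ ((j : ℤ) - 1) • y j) (γ • v) := by
    simpa [smul_smul, ← mul_assoc, hγρ] using hLaurent.const_smul γ
  have hψ_split : ∀ j, ψ j =
      (Pa - 1) *ᵥ y j - (if j = 0 then 0 else y (j - 1)) + (if j = 1 then ra else 0) := by
    rintro (_ | _ | j)
    · simp [hψ0, sub_mulVec]
    · simp only [hψ1, sub_mulVec, one_mulVec, ↓reduceIte, tsub_self]
      abel
    · simp [hψ (j + 2) (by omega), sub_mulVec]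
  have hsum := ((hy.mapL (Pa - 1).mulVecLin.toContinuousLinearMap).sub
    (hy.zpow_smul_shift hρ0)).add (hasSum_zpow_smul_ite_one ρ ra)
  have hvalue : ra + γ • (Pa *ᵥ v) - v = (Pa - 1) *ᵥ (γ • v) - ρ • γ • v + ra := by
    simp only [mulVec_smul, sub_mulVec, one_mulVec]
    linear_combination (norm := module) hγρ • v
  rw [hvalue]
  refine hsum.congr_fun fun j => ?_
  simp only [hψ_split, smul_add, smul_sub, LinearMap.coe_toContinuousLinearMap', mulVecLin_apply,
    mulVec_smul]

/-- **Laurent expansion of the advantage vector** (indexing shifted by one: the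
`j`-th terms below are `y_{j-1}` and `ψ_{j-1}` of the paper, so the sums run over
`j = -1, 0, 1, …`). Let `v` be the value vector of policy `π` (solving the Bellman
equations) and `q = r_a + γ P_a v` the action-value vector of action `a`. Set
`ρ = (1-γ)/γ`. If the Laurent expansion `v = (1+ρ) Σ_{j≥-1} ρ^j y_j` holds, then
`q - v = Σ_{j≥-1} ρ^j ψ_j`, where `ψ_{-1} = (P_a - I) y_{-1}`,
`ψ_0 = r_a + (P_a - I) y_0 - y_{-1}`, and `ψ_j = (P_a - I) y_j - y_{j-1}` for
`j ≥ 1`. -/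
theorem advantage_laurent_expansion
    (n : ℕ)
    (Pπ Pa : Matrix (Fin n) (Fin n) ℝ)
    (hPπ_nonneg : ∀ i j, 0 ≤ Pπ i j) (hPπ_row : ∀ i, ∑ j, Pπ i j = 1)
    (hPa_nonneg : ∀ i j, 0 ≤ Pa i j) (hPa_row : ∀ i, ∑ j, Pa i j = 1)
    (rπ ra : Fin n → ℝ)
    (γ ρ : ℝ) (hγ0 : 0 < γ) (hγ1 : γ < 1) (hρ : ρ = (1 - γ) / γ)
    (v : Fin n → ℝ)
    (hv : v = rπ + γ • (Pπ *ᵥ v))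
    (y ψ : ℕ → Fin n → ℝ)
    -- the Laurent expansion v = (1+ρ) Σ_{j≥-1} ρ^j y_j
    (hLaurent : HasSum (fun j : ℕ => ((1 + ρ) * ρ ^ ((j : ℤ) - 1)) • y j) v)
    -- ψ_{-1} = (P_a - I) y_{-1}
    (hψ0 : ψ 0 = Pa *ᵥ y 0 - y 0)
    -- ψ_0 = r_a + (P_a - I) y_0 - y_{-1}
    (hψ1 : ψ 1 = ra + (Pa *ᵥ y 1 - y 1) - y 0)
    -- ψ_j = (P_a - I) y_j - y_{j-1} for j ≥ 1
    (hψ : ∀ j, 2 ≤ j → ψ j = (Pa *ᵥ y j - y j) - y (j - 1)) :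
    HasSum (fun j : ℕ => (ρ ^ ((j : ℤ) - 1)) • ψ j)
      ((ra + γ • (Pa *ᵥ v)) - v) :=
  advantage_laurent_expansion_general n Pa ra γ ρ hγ0 hγ1 hρ v y ψ hLaurent hψ0 hψ1 hψ
end

section
/- For a finite MDP, policy π, action a, and state s, let Δ(γ) = Q^π_γ(s,a) − V^π_γ(s) be expressed as A(γ)/B(γ) with A(γ)=(1−γ)^{c₁}A₁(γ), B(γ)=(1−γ)^{c₂}B₁(γ), A₁(1)≠0, B₁(1)≠0. Then A₁(1)/B₁(1) = ψ^{a,π}_{j₀}(s), where j₀ = min{ j : ψ^{a,π}_j(s) ≠ 0 } and ψ^{a,π}_j are the Laurent coefficient vectors of q^π_a − v^π at γ = 1. Consequently the μ-ordering sign of Δ agrees with the sign of the first nonzero Laurent coefficient used by the Miller–Veinott policy improvement step. -/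
/-!
Write `ρ = (1 - γ)/γ`, so that `γ (1 + ρ) = 1`. Substituting the Laurent expansion of `v^π_γ`
into `r_a + γ P_a v - v` gives `Δ(γ) = ∑ⱼ ρ^(j-1) ψ j (s)` near `γ = 1`. If `J` is the first
index with `ψ J s ≠ 0`, then `ρ^(1-J) Δ(γ)` is a convergent power series in `ρ` with constant
term `ψ J s`, hence tends to `ψ J s` as `γ → 1⁻`. On the rational side,
`ρ^(1-J) Δ(γ) = (1-γ)^(c₁-c₂+1-J) γ^(J-1) A₁(γ)/B₁(γ)` with `A₁/B₁ → A₁(1)/B₁(1) ≠ 0`;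
a power of `1 - γ` has a finite nonzero limit only if the exponent is zero, so both limits agree.
-/

open Matrix Polynomial Filter Topology

theorem hasSum_zpow_smul_of_hasSum_laurent {ι : Type*} [Fintype ι] (P : Matrix ι ι ℝ)
    (r v : ι → ℝ) (y ψ : ℕ → ι → ℝ) {γ ρ : ℝ} (hρ : ρ ≠ 0) (hγρ : γ * (1 + ρ) = 1)
    (hv : HasSum (fun j : ℕ => ((1 + ρ) * ρ ^ ((j : ℤ) - 1)) • y j) v)
    (hψ0 : ψ 0 = P *ᵥ y 0 - y 0) (hψ1 : ψ 1 = r + (P *ᵥ y 1 - y 1) - y 0)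
    (hψ : ∀ j, 2 ≤ j → ψ j = (P *ᵥ y j - y j) - y (j - 1)) :
    HasSum (fun j : ℕ => ρ ^ ((j : ℤ) - 1) • ψ j) (r + γ • P *ᵥ v - v) := by
  have hw : HasSum (fun j : ℕ => ρ ^ ((j : ℤ) - 1) • y j) (γ • v) := by
    simpa [smul_smul, ← mul_assoc, hγρ] using hv.const_smul γ
  have hPw : HasSum (fun j : ℕ => ρ ^ ((j : ℤ) - 1) • P *ᵥ y j) (γ • P *ᵥ v) := by
    simpa [Function.comp_def, Matrix.mulVec_smul] using
      hw.map (Matrix.mulVecLin P) (Matrix.mulVecLin P).continuous_of_finiteDimensional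
  have hshift : HasSum (fun j : ℕ => ρ ^ ((j : ℤ) - 1) • if j = 0 then 0 else y (j - 1))
      ((1 - γ) • v) := by
    have h : HasSum (fun k : ℕ => ρ ^ (k : ℤ) • y k) ((1 - γ) • v) := by
      convert hw.const_smul ρ using 1
      · funext k
        rw [smul_smul, ← zpow_one_add₀ hρ, add_sub_cancel]
      · rw [smul_smul, show ρ * γ = 1 - γ by linear_combination hγρ]
    simpa using HasSum.zero_add
      (f := fun j : ℕ => ρ ^ ((j : ℤ) - 1) • if j = 0 then 0 else y (j - 1)) (by simpa using h)
  have h := ((hPw.sub hw).sub hshift).add (hasSum_ite_eq 1 r)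
  rw [show γ • P *ᵥ v - γ • v - (1 - γ) • v + r = r + γ • P *ᵥ v - v by module] at h
  refine h.congr_fun fun j => ?_
  match j with
  | 0 => simp [hψ0, smul_sub]
  | 1 =>
    simp only [Nat.cast_one, sub_self, zpow_zero, hψ1, smul_sub, smul_add, one_smul,
      one_ne_zero, ↓reduceIte, tsub_self]
    abel
  | j + 2 => simp [hψ (j + 2) le_add_self, smul_sub]

theorem tendsto_tsum_mul_pow_nhds_zero {g : ℕ → ℝ} {c : ℝ} (hc : 0 < c)
    (hs : Summable fun k => g k * c ^ k) :
    Tendsto (fun x => ∑' k, g k * x ^ k) (𝓝 0) (𝓝 (g 0)) := by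
  have hcont : ContinuousOn (fun x => ∑' k, g k * x ^ k) (Metric.closedBall 0 c) := by
    refine continuousOn_tsum (fun k => (continuous_const.mul (continuous_pow k)).continuousOn)
      (summable_abs_iff.2 hs) fun k x hx => ?_
    have hx' : ‖x‖ ≤ c := mem_closedBall_zero_iff.1 hx
    rw [norm_mul, norm_pow, Real.norm_eq_abs, abs_mul, abs_of_pos (pow_pos hc k)]
    gcongr
  convert (hcont.continuousAt (Metric.closedBall_mem_nhds 0 hc)).tendsto using 2
  rw [tsum_eq_single 0 fun k hk => by simp [hk]]
  simp

theorem HasSum.zpow_shift_of_forall_lt_eq_zero {a : ℕ → ℝ} {J : ℕ} (hJ : ∀ i < J, a i = 0)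
    {ρ x : ℝ} (hρ : ρ ≠ 0) (h : HasSum (fun j : ℕ => ρ ^ ((j : ℤ) - 1) * a j) x) :
    HasSum (fun k => a (k + J) * ρ ^ k) (ρ ^ (1 - (J : ℤ)) * x) := by
  have h' := (hasSum_nat_add_iff' J).2 h
  rw [Finset.sum_eq_zero fun i hi => by rw [hJ i (Finset.mem_range.1 hi), mul_zero],
    sub_zero] at h'
  refine (h'.mul_left (ρ ^ (1 - (J : ℤ)))).congr_fun fun k => ?_
  rw [← mul_assoc, ← zpow_add₀ hρ, mul_comm]
  push_cast
  rw [show 1 - (J : ℤ) + (k + J - 1) = k by ring, zpow_natCast]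

theorem tendsto_zpow_mul_of_hasSum_laurent {α : Type*} {l : Filter α} {a : ℕ → ℝ} {J : ℕ}
    (hJ : ∀ i < J, a i = 0) {ρ F : α → ℝ} (hρ : Tendsto ρ l (𝓝[>] 0))
    (hF : ∀ᶠ x in l, HasSum (fun j : ℕ => ρ x ^ ((j : ℤ) - 1) * a j) (F x)) :
    Tendsto (fun x => ρ x ^ (1 - (J : ℤ)) * F x) l (𝓝 (a J)) := by
  rcases l.eq_or_neBot with rfl | hl
  · exact tendsto_bot
  have hpos : ∀ᶠ x in l, 0 < ρ x := hρ self_mem_nhdsWithin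
  have hshift : ∀ᶠ x in l,
      HasSum (fun k => a (k + J) * ρ x ^ k) (ρ x ^ (1 - (J : ℤ)) * F x) := by
    filter_upwards [hF, hpos] with x hx hx0
    exact hx.zpow_shift_of_forall_lt_eq_zero hJ hx0.ne'
  obtain ⟨x₀, hx₀, hx₀pos⟩ := (hshift.and hpos).exists
  have hlim := (tendsto_tsum_mul_pow_nhds_zero hx₀pos hx₀.summable).comp
    (hρ.mono_right nhdsWithin_le_nhds)
  rw [zero_add] at hlim
  refine hlim.congr' ?_
  filter_upwards [hshift] with x hx using hx.tsum_eq

theorem eq_zero_of_tendsto_zpow {α : Type*} {l : Filter α} [l.NeBot] {u : α → ℝ} {d : ℤ}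
    {K : ℝ} (hu : Tendsto u l (𝓝[>] 0)) (h : Tendsto (fun x => u x ^ d) l (𝓝 K))
    (hK : K ≠ 0) : d = 0 := by
  rcases lt_trichotomy d 0 with hd | hd | hd
  · have hinf : Tendsto (fun x => u x ^ d) l atTop := by
      refine ((tendsto_zpow_atTop_atTop (neg_pos.2 hd)).comp
        hu.inv_tendsto_nhdsGT_zero).congr fun x => ?_
      simp [_root_.inv_zpow']
    exact absurd h (not_tendsto_nhds_of_tendsto_atTop hinf K)
  · exact hd
  · have h0 := (hu.mono_right nhdsWithin_le_nhds).zpow₀ d (Or.inr hd.le)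
    rw [_root_.zero_zpow d hd.ne'] at h0
    exact absurd (tendsto_nhds_unique h h0) hK

theorem eq_of_tendsto_zpow_mul {α : Type*} {l : Filter α} [l.NeBot] {u h : α → ℝ} {d : ℤ}
    {L M : ℝ} (hu : Tendsto u l (𝓝[>] 0)) (hM : Tendsto (fun x => u x ^ d * h x) l (𝓝 M))
    (hh : Tendsto h l (𝓝 L)) (hL : L ≠ 0) (hM0 : M ≠ 0) : L = M := by
  have hd : Tendsto (fun x => u x ^ d) l (𝓝 (M / L)) := by
    refine (hM.div hh hL).congr' ?_
    filter_upwards [hh.eventually_ne hL] with x hx using mul_div_cancel_right₀ _ hx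
  obtain rfl := eq_zero_of_tendsto_zpow hu hd (div_ne_zero hM0 hL)
  simp only [zpow_zero, one_mul] at hM
  exact tendsto_nhds_unique hh hM

theorem tendsto_one_sub_nhdsLT_one : Tendsto (fun γ : ℝ => 1 - γ) (𝓝[<] 1) (𝓝[>] 0) := by
  refine tendsto_nhdsWithin_iff.2 ⟨?_, eventually_nhdsWithin_of_forall fun γ hγ => ?_⟩
  · have h : Tendsto (fun γ : ℝ => 1 - γ) (𝓝 1) (𝓝 (1 - 1)) := tendsto_const_nhds.sub tendsto_id
    simpa using h.mono_left nhdsWithin_le_nhds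
  · exact sub_pos.2 (Set.mem_Iio.1 hγ)

theorem tendsto_one_sub_div_self_nhdsLT_one :
    Tendsto (fun γ : ℝ => (1 - γ) / γ) (𝓝[<] 1) (𝓝[>] 0) := by
  refine tendsto_nhdsWithin_iff.2 ⟨?_, ?_⟩
  · have h : Tendsto (fun γ : ℝ => (1 - γ) / γ) (𝓝 1) (𝓝 ((1 - 1) / 1)) :=
      (tendsto_const_nhds.sub tendsto_id).div tendsto_id one_ne_zero
    simpa using h.mono_left nhdsWithin_le_nhds
  · filter_upwards [Ioo_mem_nhdsLT zero_lt_one] with γ hγ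
    exact div_pos (sub_pos.2 hγ.2) hγ.1

theorem one_sub_div_zpow_mul_eq {γ : ℝ} (hγ : 1 - γ ≠ 0) (a b : ℝ) (c₁ c₂ J : ℕ) :
    ((1 - γ) / γ) ^ (1 - (J : ℤ)) * ((1 - γ) ^ c₁ * a / ((1 - γ) ^ c₂ * b)) =
      (1 - γ) ^ ((c₁ : ℤ) - c₂ + 1 - J) * (γ ^ ((J : ℤ) - 1) * (a / b)) := by
  rw [show (c₁ : ℤ) - c₂ + 1 - J = 1 - J + c₁ - c₂ by ring, zpow_sub₀ hγ, zpow_add₀ hγ,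
    zpow_natCast, zpow_natCast, show (J : ℤ) - 1 = -(1 - J) by ring, _root_.zpow_neg, div_zpow]
  ring

/-- **Rational-function sign equals first nonzero Laurent coefficient**
(equivalence of the μ-ordering improvement test with the Miller–Veinott test).
Let `Δ(γ) = Q^π_γ(s,a) - V^π_γ(s) = A(γ)/B(γ)` with `A = (1-X)^{c₁} A₁`,
`B = (1-X)^{c₂} B₁`, `A₁(1) ≠ 0`, `B₁(1) ≠ 0`, and let
`ψ_j` (indexed from `-1`, i.e. `ψ j` below is `ψ_{j-1}` of the paper) be the Laurent
coefficient vectors of `q^π_a - v^π` at `γ = 1`, obtained from the expansion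
`v^π_γ = (1+ρ) Σ_{j≥-1} ρ^j y_j`, `ρ = (1-γ)/γ`.  Then
`A₁(1)/B₁(1) = ψ_{j₀}(s)` where `j₀` is the first index with `ψ_{j₀}(s) ≠ 0`;
consequently the μ-ordering sign of `Δ` agrees with the sign of the first nonzero
Laurent coefficient. -/
theorem mu_sign_eq_first_nonzero_laurent_coeff
    (n : ℕ)
    (T : Fin n → Fin n → ℝ) (ra : Fin n → ℝ)   -- transitions and rewards of action a
    (V : ℝ → Fin n → ℝ)                         -- discounted values of policy π
    (s : Fin n)
    (A B A₁ B₁ : Polynomial ℝ) (c₁ c₂ : ℕ)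
    (hA_fac : A = (1 - X) ^ c₁ * A₁) (hB_fac : B = (1 - X) ^ c₂ * B₁)
    (hA₁ : A₁.eval 1 ≠ 0) (hB₁ : B₁.eval 1 ≠ 0)
    -- Δ(γ) = Q^π_γ(s,a) - V^π_γ(s) is the rational function A/B on [0,1)
    (hrat : ∀ γ : ℝ, 0 ≤ γ → γ < 1 → B.eval γ ≠ 0 ∧
      (ra s + γ * ∑ s', T s s' * V γ s') - V γ s = A.eval γ / B.eval γ)
    (y ψ : ℕ → Fin n → ℝ)
    -- the Laurent expansion of v^π_γ holds near γ = 1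
    (hLaurent : ∃ γ₀ : ℝ, 0 ≤ γ₀ ∧ γ₀ < 1 ∧ ∀ γ : ℝ, γ₀ < γ → γ < 1 →
      HasSum (fun j : ℕ => ((1 + (1 - γ) / γ) * ((1 - γ) / γ) ^ ((j : ℤ) - 1)) • y j)
        (V γ))
    -- ψ_{-1} = (P_a - I) y_{-1}
    (hψ0 : ψ 0 = (fun t => ∑ t', T t t' * y 0 t') - y 0)
    -- ψ_0 = r_a + (P_a - I) y_0 - y_{-1}
    (hψ1 : ψ 1 = ra + ((fun t => ∑ t', T t t' * y 1 t') - y 1) - y 0)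
    -- ψ_j = (P_a - I) y_j - y_{j-1} for j ≥ 1
    (hψ : ∀ j, 2 ≤ j → ψ j = ((fun t => ∑ t', T t t' * y j t') - y j) - y (j - 1))
    -- Δ is not identically zero: some Laurent coefficient at s is nonzero
    (hne : ∃ j, ψ j s ≠ 0) :
    A₁.eval 1 / B₁.eval 1 = ψ (Nat.find hne) s ∧
    (0 < A₁.eval 1 * B₁.eval 1 ↔ 0 < ψ (Nat.find hne) s) := by
  obtain ⟨γ₀, hγ₀, hγ₀1, hV⟩ := hLaurent
  set J := Nat.find hne
  have hnear : ∀ᶠ γ in 𝓝[<] (1 : ℝ), γ ∈ Set.Ioo γ₀ 1 := Ioo_mem_nhdsLT hγ₀1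
  have hseries : Tendsto (fun γ => ((1 - γ) / γ) ^ (1 - (J : ℤ)) * (A.eval γ / B.eval γ))
      (𝓝[<] 1) (𝓝 (ψ J s)) := by
    refine tendsto_zpow_mul_of_hasSum_laurent (fun i hi => not_not.1 (Nat.find_min hne hi))
      tendsto_one_sub_div_self_nhdsLT_one ?_
    filter_upwards [hnear] with γ ⟨hγ₀γ, hγ1⟩
    have hγ : 0 < γ := hγ₀.trans_lt hγ₀γ
    rw [← (hrat γ hγ.le hγ1).2]
    exact Pi.hasSum.1 (hasSum_zpow_smul_of_hasSum_laurent T ra (V γ) y ψ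
      (div_pos (sub_pos.2 hγ1) hγ).ne' (by field_simp; ring) (hV γ hγ₀γ hγ1) hψ0 hψ1 hψ) s
  have hrational : ∀ᶠ γ in 𝓝[<] (1 : ℝ),
      ((1 - γ) / γ) ^ (1 - (J : ℤ)) * (A.eval γ / B.eval γ) =
        (1 - γ) ^ ((c₁ : ℤ) - c₂ + 1 - J) * (γ ^ ((J : ℤ) - 1) * (A₁.eval γ / B₁.eval γ)) := by
    filter_upwards [hnear] with γ ⟨_, hγ1⟩
    simp only [hA_fac, hB_fac, eval_mul, eval_pow, eval_sub, eval_one, eval_X]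
    exact one_sub_div_zpow_mul_eq (sub_ne_zero.2 hγ1.ne') _ _ c₁ c₂ J
  have hquot : Tendsto (fun γ : ℝ => γ ^ ((J : ℤ) - 1) * (A₁.eval γ / B₁.eval γ)) (𝓝[<] 1)
      (𝓝 (A₁.eval 1 / B₁.eval 1)) := by
    have hcont := (continuousAt_zpow₀ (1 : ℝ) ((J : ℤ) - 1) (Or.inl one_ne_zero)).mul
      (A₁.continuousAt.div B₁.continuousAt hB₁)
    simpa [Pi.mul_def, Pi.div_def] using hcont.tendsto.mono_left nhdsWithin_le_nhds
  have hlim : A₁.eval 1 / B₁.eval 1 = ψ J s :=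
    eq_of_tendsto_zpow_mul tendsto_one_sub_nhdsLT_one (hseries.congr' hrational) hquot
      (div_ne_zero hA₁ hB₁) (Nat.find_spec hne)
  exact ⟨hlim, by rw [← hlim, div_pos_iff, mul_pos_iff]⟩
end
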